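/- Let μ be a Borel probability measure on [0,1], Q^μ its quantile function, and suppose there exist 0 ≤ z¹ < z² < 1/2 with Q^μ(zⁱ) = Q^μ(zⁱ + 1/2) for i = 1,2. Then μ has an atom of mass strictly greater than 1/2. -/

import Mathlib

/-!
Since `Q^μ` is monotone and `z₂ ≤ z₁ + 1/2`, the two hypotheses force `Q^μ(z₁) = Q^μ(z₂) =: b`.
The infimum defining `Q^μ(z₂ + 1/2) = b` is attained, so `μ [0, b] ≥ z₂ + 1/2`, while every
`t < b = Q^μ(z₁)` has `μ [0, t] < z₁`, so `μ [0, b) ≤ z₁`. Hence `μ {b} ≥ z₂ - z₁ + 1/2 > 1/2`.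
-/

open MeasureTheory Set

/-- The quantile function of a Borel probability measure `μ` on `[0,1]`:
`Q^μ(p) = inf {t ∈ [0,1] : μ([0,t]) ≥ p}`. -/
noncomputable def quantile (μ : Measure ℝ) (p : ℝ) : ℝ :=
  sInf {t ∈ Icc (0:ℝ) 1 | ENNReal.ofReal p ≤ μ (Icc 0 t)}

open Filter Topology

lemma biInter_gt_Icc {α : Type*} [LinearOrder α] [DenselyOrdered α] [NoMaxOrder α] (a b : α) :
    ⋂ r > b, Icc a r = Icc a b := by
  ext x
  simp only [mem_iInter, mem_Icc]
  obtain ⟨c, hc⟩ := exists_gt b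
  refine ⟨fun h ↦ ⟨(h c hc).1, ?_⟩, fun hx r hr ↦ ⟨hx.1, hx.2.trans hr.le⟩⟩
  exact le_of_forall_gt_imp_ge_of_dense fun r hr ↦ (h r hr).2

section

variable {μ : Measure ℝ} {p q t : ℝ}

lemma quantile_nonneg : 0 ≤ quantile μ p :=
  Real.sInf_nonneg fun _ ht ↦ ht.1.1

lemma quantile_le_one : quantile μ p ≤ 1 := by
  rcases eq_empty_or_nonempty {t ∈ Icc (0:ℝ) 1 | ENNReal.ofReal p ≤ μ (Icc 0 t)} with hS | ⟨t, ht⟩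
  · rw [quantile, hS, Real.sInf_empty]
    exact zero_le_one
  · exact csInf_le_of_le ⟨0, fun _ hs ↦ hs.1.1⟩ ht ht.1.2

lemma quantile_le (ht : t ∈ Icc (0:ℝ) 1) (hpt : ENNReal.ofReal p ≤ μ (Icc 0 t)) :
    quantile μ p ≤ t :=
  csInf_le ⟨0, fun _ hs ↦ hs.1.1⟩ ⟨ht, hpt⟩

lemma quantile_le_quantile (hpq : p ≤ q) (hq : ENNReal.ofReal q ≤ μ (Icc 0 1)) :
    quantile μ p ≤ quantile μ q :=
  csInf_le_csInf ⟨0, fun _ hs ↦ hs.1.1⟩ ⟨1, ⟨zero_le_one, le_rfl⟩, hq⟩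
    fun _ hs ↦ ⟨hs.1, (ENNReal.ofReal_le_ofReal hpq).trans hs.2⟩

/-- The infimum defining the quantile is attained, by right continuity of `t ↦ μ [0, t]`. -/
lemma le_measure_Icc_quantile [IsFiniteMeasure μ] (hp : ENNReal.ofReal p ≤ μ (Icc 0 1)) :
    ENNReal.ofReal p ≤ μ (Icc 0 (quantile μ p)) := by
  set S := {t ∈ Icc (0:ℝ) 1 | ENNReal.ofReal p ≤ μ (Icc 0 t)}
  have hS : S.Nonempty := ⟨1, ⟨zero_le_one, le_rfl⟩, hp⟩
  have hcont : Tendsto (fun r ↦ μ (Icc 0 r)) (𝓝[>] (quantile μ p))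
      (𝓝 (μ (Icc 0 (quantile μ p)))) := by
    rw [← biInter_gt_Icc]
    exact tendsto_measure_biInter_gt (fun _ _ ↦ nullMeasurableSet_Icc)
      (fun _ _ _ hij ↦ Icc_subset_Icc_right hij)
      ⟨quantile μ p + 1, by linarith, measure_ne_top _ _⟩
  refine ge_of_tendsto hcont (eventually_nhdsWithin_of_forall fun r hr ↦ ?_)
  obtain ⟨s, ⟨_, hs⟩, hsr⟩ := exists_lt_of_csInf_lt hS hr
  exact hs.trans (measure_mono (Icc_subset_Icc_right hsr.le))

lemma measure_Ico_quantile_le : μ (Ico 0 (quantile μ p)) ≤ ENNReal.ofReal p := by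
  rcases (quantile_nonneg : 0 ≤ quantile μ p).eq_or_lt with ha | ha
  · simp [← ha]
  obtain ⟨u, hu_mono, hu_mem, hu_lim⟩ := exists_seq_strictMono_tendsto' ha
  have hIco : Ico 0 (quantile μ p) = ⋃ n, Icc 0 (u n) := by
    rw [← Ici_inter_Iio, ← iUnion_Iic_eq_Iio_of_lt_of_tendsto (fun n ↦ (hu_mem n).2) hu_lim,
      inter_iUnion]
    simp only [Ici_inter_Iic]
  rw [hIco, Monotone.measure_iUnion fun m n hmn ↦ Icc_subset_Icc_right (hu_mono.monotone hmn)]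
  refine iSup_le fun n ↦ ?_
  by_contra! hlt
  have hmem : u n ∈ Icc (0:ℝ) 1 := ⟨(hu_mem n).1.le, (hu_mem n).2.le.trans quantile_le_one⟩
  exact (quantile_le hmem hlt.le).not_gt (hu_mem n).2

end

/-- If there are `0 ≤ z¹ < z² < 1/2` with `Q^μ(zⁱ) = Q^μ(zⁱ + 1/2)` for `i = 1,2`,
then `μ` has an atom of mass strictly greater than `1/2`. -/
theorem atom_of_quantile_eq (μ : Measure ℝ) [IsProbabilityMeasure μ]
    (hsupp : μ (Icc (0:ℝ) 1) = 1)
    (z₁ z₂ : ℝ) (h0 : 0 ≤ z₁) (h12 : z₁ < z₂) (h2 : z₂ < 1/2)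
    (hq1 : quantile μ z₁ = quantile μ (z₁ + 1/2))
    (hq2 : quantile μ z₂ = quantile μ (z₂ + 1/2)) :
    ∃ t : ℝ, 1/2 < μ {t} := by
  have hmass {q : ℝ} (hq : q ≤ 1) : ENNReal.ofReal q ≤ μ (Icc 0 1) := by
    rw [hsupp]; exact ENNReal.ofReal_le_one.mpr hq
  set b := quantile μ z₂
  have hb : quantile μ z₁ = b :=
    le_antisymm (quantile_le_quantile h12.le (hmass (by linarith))) <| hq1 ▸
      quantile_le_quantile (by linarith) (hmass (by linarith))
  have hupper : ENNReal.ofReal (z₂ + 1/2) ≤ μ (Icc 0 b) :=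
    hq2 ▸ le_measure_Icc_quantile (hmass (by linarith))
  have hlower : μ (Ico 0 b) ≤ ENNReal.ofReal z₁ := hb ▸ measure_Ico_quantile_le
  refine ⟨b, ?_⟩
  by_contra! hsmall
  have hle : ENNReal.ofReal (z₂ + 1/2) ≤ ENNReal.ofReal (z₁ + 1/2) := calc
    _ ≤ μ (Icc 0 b) := hupper
    _ = μ (Ico 0 b) + μ {b} := by
      rw [← Ico_union_right (quantile_nonneg : 0 ≤ b),
        measure_union (disjoint_singleton_right.mpr fun h ↦ h.2.false) (measurableSet_singleton b)]
    _ ≤ ENNReal.ofReal z₁ + ENNReal.ofReal (1/2) := by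
      gcongr; simpa [ENNReal.ofReal_div_of_pos] using hsmall
    _ = ENNReal.ofReal (z₁ + 1/2) := (ENNReal.ofReal_add h0 (by norm_num)).symm
  linarith [(ENNReal.ofReal_le_ofReal_iff (by linarith)).mp hle]
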